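/- arXiv:1209.1436 — 3 statements merged into one kernel-verified Lean document; each statement's English description precedes it below -/
import Mathlib

section
/- (Amalgamation of typed objects, Composition) Let (C, M) be an M-adhesive category satisfying the horizontal van Kampen property. Given a pushout square of 'type objects' TG_D → TG_B, TG_D → TG_C, TG_B → TG_A, TG_C → TG_A with all four morphisms in M, and typed objects g_B : G_B → TG_B, g_C : G_C → TG_C, g_D : G_D → TG_D such that g_D is a pullback-restriction of both g_B (along TG_D → TG_B) and g_C (along TG_D → TG_C). Then there exists a typed object g_A : G_A → TG_A, with G_A the pushout of G_B ← G_D → G_C, such that both trapezoid squares (G_B, TG_B, G_A, TG_A) and (G_C, TG_C, G_A, TG_A) are pullbacks; i.e., g_B and g_C are restrictions of g_A. -/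
open CategoryTheory CategoryTheory.Limits

universe v u

variable {𝒞 : Type u} [Category.{v} 𝒞]

/-- An `M`-adhesive category (Def 2.1): `M` is a class of monomorphisms closed under
isomorphisms, composition and decomposition; the category has pushouts and pullbacks
along `M`-morphisms; `M` is closed under pushouts and pullbacks; and pushouts along
`M`-morphisms satisfy the vertical van Kampen property. -/
structure MAdhesive (M : MorphismProperty 𝒞) : Prop where
  mono : ∀ ⦃X Y : 𝒞⦄ ⦃f : X ⟶ Y⦄, M f → Mono f
  iso_closed : ∀ ⦃X Y : 𝒞⦄ (f : X ⟶ Y) [IsIso f], M f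
  comp_closed : ∀ ⦃X Y Z : 𝒞⦄ ⦃f : X ⟶ Y⦄ ⦃g : Y ⟶ Z⦄, M f → M g → M (f ≫ g)
  decomp_closed : ∀ ⦃X Y Z : 𝒞⦄ ⦃f : X ⟶ Y⦄ ⦃g : Y ⟶ Z⦄, M (f ≫ g) → M g → M f
  hasPushout : ∀ ⦃X Y Z : 𝒞⦄ (f : X ⟶ Y) (g : X ⟶ Z), M f → HasPushout f g
  hasPullback : ∀ ⦃X Y Z : 𝒞⦄ (f : X ⟶ Z) (g : Y ⟶ Z), M f → HasPullback f g
  pushout_stable : ∀ ⦃W X Y Z : 𝒞⦄ ⦃f : W ⟶ X⦄ ⦃g : W ⟶ Y⦄ ⦃h : X ⟶ Z⦄ ⦃i : Y ⟶ Z⦄,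
    IsPushout f g h i → M f → M i
  pullback_stable : ∀ ⦃W X Y Z : 𝒞⦄ ⦃f : W ⟶ X⦄ ⦃g : W ⟶ Y⦄ ⦃h : X ⟶ Z⦄ ⦃i : Y ⟶ Z⦄,
    IsPullback f g h i → M i → M f
  vertical_vk : ∀ ⦃W X Y Z : 𝒞⦄ ⦃f : W ⟶ X⦄ ⦃g : W ⟶ Y⦄ ⦃h : X ⟶ Z⦄ ⦃i : Y ⟶ Z⦄,
    M f → IsPushout f g h i →
    ∀ ⦃W' X' Y' Z' : 𝒞⦄ ⦃f' : W' ⟶ X'⦄ ⦃g' : W' ⟶ Y'⦄ ⦃h' : X' ⟶ Z'⦄ ⦃i' : Y' ⟶ Z'⦄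
      ⦃a : W' ⟶ W⦄ ⦃b : X' ⟶ X⦄ ⦃c : Y' ⟶ Y⦄ ⦃d : Z' ⟶ Z⦄,
      M a → M b → M c → M d →
      h' ≫ d = b ≫ h → i' ≫ d = c ≫ i →
      IsPullback f' a b f → IsPullback g' a c g →
      (IsPushout f' g' h' i' ↔ (IsPullback h' b d h ∧ IsPullback i' c d i))

/-- The horizontal van Kampen property: the van Kampen property for commutative cubes
over a pushout along `M`-morphisms all of whose horizontal morphisms are in `M`. -/
def HorizontalVK (M : MorphismProperty 𝒞) : Prop :=
  ∀ ⦃W X Y Z : 𝒞⦄ ⦃f : W ⟶ X⦄ ⦃g : W ⟶ Y⦄ ⦃h : X ⟶ Z⦄ ⦃i : Y ⟶ Z⦄,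
    M f → M g → M h → M i → IsPushout f g h i →
    ∀ ⦃W' X' Y' Z' : 𝒞⦄ ⦃f' : W' ⟶ X'⦄ ⦃g' : W' ⟶ Y'⦄ ⦃h' : X' ⟶ Z'⦄ ⦃i' : Y' ⟶ Z'⦄
      ⦃a : W' ⟶ W⦄ ⦃b : X' ⟶ X⦄ ⦃c : Y' ⟶ Y⦄ ⦃d : Z' ⟶ Z⦄,
      M f' → M g' → M h' → M i' →
      h' ≫ d = b ≫ h → i' ≫ d = c ≫ i →
      IsPullback f' a b f → IsPullback g' a c g →
      (IsPushout f' g' h' i' ↔ (IsPullback h' b d h ∧ IsPullback i' c d i))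

/-- Effective pushouts: the pushout over the pullback of two `M`-morphisms into a common
object yields a comparison morphism that again lies in `M`. -/
def EffectivePushouts (M : MorphismProperty 𝒞) : Prop :=
  ∀ ⦃A B C D X : 𝒞⦄ ⦃a : B ⟶ X⦄ ⦃b : C ⟶ X⦄, M a → M b →
    ∀ ⦃p₁ : A ⟶ B⦄ ⦃p₂ : A ⟶ C⦄ ⦃i₁ : B ⟶ D⦄ ⦃i₂ : C ⟶ D⦄ ⦃u : D ⟶ X⦄,
      IsPullback p₁ p₂ a b → IsPushout p₁ p₂ i₁ i₂ →
      i₁ ≫ u = a → i₂ ≫ u = b → M u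

/-- Amalgamation of typed objects (Composition): given a pushout of type objects along
`M`-morphisms and typed objects `g_B`, `g_C` agreeing in their common restriction
`g_D`, there is an amalgamation `g_A = g_B +_{g_D} g_C`: a typed object `g_A` with the
`G`'s forming a pushout and `g_B`, `g_C` restrictions of `g_A`. -/
theorem amalgamation_composition {M : MorphismProperty 𝒞}
    (hM : MAdhesive M) (hVK : HorizontalVK M)
    {TG_A TG_B TG_C TG_D G_B G_C G_D : 𝒞}
    {tg_DB : TG_D ⟶ TG_B} {tg_DC : TG_D ⟶ TG_C} {tg_BA : TG_B ⟶ TG_A} {tg_CA : TG_C ⟶ TG_A}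
    (hPO : IsPushout tg_DB tg_DC tg_BA tg_CA)
    (h1 : M tg_DB) (h2 : M tg_DC) (h3 : M tg_BA) (h4 : M tg_CA)
    (g_B : G_B ⟶ TG_B) (g_C : G_C ⟶ TG_C) (g_D : G_D ⟶ TG_D)
    {g_DB : G_D ⟶ G_B} {g_DC : G_D ⟶ G_C}
    (hres_B : IsPullback g_DB g_D g_B tg_DB)
    (hres_C : IsPullback g_DC g_D g_C tg_DC) :
    ∃ (G_A : 𝒞) (g_A : G_A ⟶ TG_A) (g_BA : G_B ⟶ G_A) (g_CA : G_C ⟶ G_A),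
      IsPushout g_DB g_DC g_BA g_CA ∧
      IsPullback g_BA g_B g_A tg_BA ∧
      IsPullback g_CA g_C g_A tg_CA := by
  have hMDB : M g_DB := hM.pullback_stable hres_B h1
  have hMDC : M g_DC := hM.pullback_stable hres_C h2
  haveI : HasPushout g_DB g_DC := hM.hasPushout _ _ hMDB
  have hTop : IsPushout g_DB g_DC (pushout.inl g_DB g_DC) (pushout.inr g_DB g_DC) :=
    IsPushout.of_hasPushout g_DB g_DC
  have hMBA : M (pushout.inr g_DB g_DC) := hM.pushout_stable hTop hMDB
  have hMCA : M (pushout.inl g_DB g_DC) := hM.pushout_stable hTop.flip hMDC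
  have hcomm : g_DB ≫ g_B ≫ tg_BA = g_DC ≫ g_C ≫ tg_CA := by
    rw [← Category.assoc, ← Category.assoc, hres_B.w, hres_C.w,
      Category.assoc, Category.assoc, hPO.w]
  refine ⟨pushout g_DB g_DC, pushout.desc (g_B ≫ tg_BA) (g_C ≫ tg_CA) hcomm,
    pushout.inl _ _, pushout.inr _ _, hTop, ?_⟩
  have := hVK h1 h2 h3 h4 hPO hMDB hMDC hMCA hMBA
    (pushout.inl_desc (g_B ≫ tg_BA) (g_C ≫ tg_CA) hcomm) (pushout.inr_desc (g_B ≫ tg_BA) (g_C ≫ tg_CA) hcomm) hres_B hres_C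
  exact this.mp hTop
end

section
/- (Amalgamation of typed objects, Decomposition) Let (C, M) be an M-adhesive category satisfying the horizontal van Kampen property. Given a pushout square TG_D → TG_B → TG_A, TG_D → TG_C → TG_A with all morphisms in M, and any typed object g_A : G_A → TG_A, the pullback-restrictions g_B : G_B → TG_B, g_C : G_C → TG_C and g_D : G_D → TG_D of g_A (and of g_B, respectively) form a pushout square G_D → G_B → G_A, G_D → G_C → G_A, so that g_A is the amalgamation g_B +_{g_D} g_C. Moreover these restrictions are unique up to isomorphism. -/
open CategoryTheory CategoryTheory.Limits

universe v u

variable {𝒞 : Type u} [Category.{v} 𝒞]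

/-- Amalgamation of typed objects (Decomposition): given a pushout of type objects
along `M`-morphisms and a typed object `g_A`, its pullback-restrictions `g_B`, `g_C`
(and `g_D`, the restriction of `g_B`) form a pushout square, so `g_A = g_B +_{g_D} g_C`;
moreover the restrictions are unique up to isomorphism. -/
theorem amalgamation_decomposition {M : MorphismProperty 𝒞}
    (hM : MAdhesive M) (hVK : HorizontalVK M)
    {TG_A TG_B TG_C TG_D G_A G_B G_C G_D : 𝒞}
    {tg_DB : TG_D ⟶ TG_B} {tg_DC : TG_D ⟶ TG_C} {tg_BA : TG_B ⟶ TG_A} {tg_CA : TG_C ⟶ TG_A}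
    (hPO : IsPushout tg_DB tg_DC tg_BA tg_CA)
    (h1 : M tg_DB) (h2 : M tg_DC) (h3 : M tg_BA) (h4 : M tg_CA)
    (g_A : G_A ⟶ TG_A)
    {g_B : G_B ⟶ TG_B} {g_BA : G_B ⟶ G_A} (hres_B : IsPullback g_BA g_B g_A tg_BA)
    {g_C : G_C ⟶ TG_C} {g_CA : G_C ⟶ G_A} (hres_C : IsPullback g_CA g_C g_A tg_CA)
    {g_D : G_D ⟶ TG_D} {g_DB : G_D ⟶ G_B} (hres_D : IsPullback g_DB g_D g_B tg_DB)
    {g_DC : G_D ⟶ G_C} (hres_D' : IsPullback g_DC g_D g_C tg_DC)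
    (hcomm : g_DB ≫ g_BA = g_DC ≫ g_CA) :
    IsPushout g_DB g_DC g_BA g_CA ∧
    (∀ {G_B' : 𝒞} (g_B' : G_B' ⟶ TG_B) (g_BA' : G_B' ⟶ G_A),
      IsPullback g_BA' g_B' g_A tg_BA →
      ∃ e : G_B ≅ G_B', e.hom ≫ g_B' = g_B ∧ e.hom ≫ g_BA' = g_BA) ∧
    (∀ {G_C' : 𝒞} (g_C' : G_C' ⟶ TG_C) (g_CA' : G_C' ⟶ G_A),
      IsPullback g_CA' g_C' g_A tg_CA →
      ∃ e : G_C ≅ G_C', e.hom ≫ g_C' = g_C ∧ e.hom ≫ g_CA' = g_CA) ∧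
    (∀ {G_D' : 𝒞} (g_D' : G_D' ⟶ TG_D) (g_DB' : G_D' ⟶ G_B),
      IsPullback g_DB' g_D' g_B tg_DB →
      ∃ e : G_D ≅ G_D', e.hom ≫ g_D' = g_D ∧ e.hom ≫ g_DB' = g_DB) := by
  refine ⟨?_, ?_, ?_, ?_⟩
  · have hMf' : M g_DB := hM.pullback_stable hres_D h1
    have hMg' : M g_DC := hM.pullback_stable hres_D' h2
    have hMh' : M g_BA := hM.pullback_stable hres_B h3
    have hMi' : M g_CA := hM.pullback_stable hres_C h4
    exact (hVK h1 h2 h3 h4 hPO hMf' hMg' hMh' hMi'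
      hres_B.w hres_C.w hres_D hres_D').mpr ⟨hres_B, hres_C⟩
  · intro G_B' g_B' g_BA' h'
    exact ⟨hres_B.isoIsPullback _ _ h',
      IsPullback.isoIsPullback_hom_snd _ _ _ _,
      IsPullback.isoIsPullback_hom_fst _ _ _ _⟩
  · intro G_C' g_C' g_CA' h'
    exact ⟨hres_C.isoIsPullback _ _ h',
      IsPullback.isoIsPullback_hom_snd _ _ _ _,
      IsPullback.isoIsPullback_hom_fst _ _ _ _⟩
  · intro G_D' g_D' g_DB' h'
    exact ⟨hres_D.isoIsPullback _ _ h',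
      IsPullback.isoIsPullback_hom_snd _ _ _ _,
      IsPullback.isoIsPullback_hom_fst _ _ _ _⟩
end

section
/- (Closure of M under restriction of the induced comparison) Let (C, M) be an M-adhesive category with effective pushouts. Let f : C_B → G_B, g : C_C → G_C, h : C_D → G_D be M-morphisms, and let (C_D → C_B, C_D → C_C, C_B → C_A, C_C → C_A) and (G_D → G_B, G_D → G_C, G_B → G_A, G_C → G_A) be two pushout squares all of whose morphisms are in M, such that the square with h, f and the D-B legs is a pullback, the square with h, g and the D-C legs is a pullback, and h is a monomorphism. Then the induced morphism q_A : C_A → G_A (from the pushout of the C's to G_A via G_B and G_C) lies in M. -/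
open CategoryTheory CategoryTheory.Limits

universe v u

variable {𝒞 : Type u} [Category.{v} 𝒞]

/-- Closure of `M` under the induced comparison: in an `M`-adhesive category with
effective pushouts, given `M`-morphisms `f`, `g`, `h` between two pushout squares of
`M`-morphisms with the two restriction squares pullbacks and `h` a monomorphism, the
induced morphism `q_A` from the pushout of the `C`'s to `G_A` lies in `M`. -/
theorem induced_comparison_in_M {M : MorphismProperty 𝒞}
    (hM : MAdhesive M) (heff : EffectivePushouts M)
    {C_A C_B C_C C_D G_A G_B G_C G_D : 𝒞}
    {f : C_B ⟶ G_B} {g : C_C ⟶ G_C} {h : C_D ⟶ G_D}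
    (hf : M f) (hg : M g) (hh : M h) [Mono h]
    {c_DB : C_D ⟶ C_B} {c_DC : C_D ⟶ C_C} {c_BA : C_B ⟶ C_A} {c_CA : C_C ⟶ C_A}
    (hCpo : IsPushout c_DB c_DC c_BA c_CA)
    (hc1 : M c_DB) (hc2 : M c_DC) (hc3 : M c_BA) (hc4 : M c_CA)
    {g_DB : G_D ⟶ G_B} {g_DC : G_D ⟶ G_C} {g_BA : G_B ⟶ G_A} {g_CA : G_C ⟶ G_A}
    (hGpo : IsPushout g_DB g_DC g_BA g_CA)
    (hg1 : M g_DB) (hg2 : M g_DC) (hg3 : M g_BA) (hg4 : M g_CA)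
    (hpbB : IsPullback c_DB h f g_DB)
    (hpbC : IsPullback c_DC h g g_DC)
    {q_A : C_A ⟶ G_A}
    (hq1 : c_BA ≫ q_A = f ≫ g_BA) (hq2 : c_CA ≫ q_A = g ≫ g_CA) :
    M q_A := by
  -- Step 1: the pushout square of the `G`'s is also a pullback (van Kampen trick).
  have hGpbk : IsPullback g_DB g_DC g_BA g_CA := by
    haveI : Mono g_DB := hM.mono hg1
    have hid : IsPullback (𝟙 G_D) (𝟙 G_D) g_DB g_DB := IsKernelPair.id_of_mono g_DB
    have hvk := hM.vertical_vk hg1 hGpo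
      (hM.iso_closed (𝟙 G_D)) hg1 (hM.iso_closed (𝟙 G_C)) hg4
      hGpo.w.symm rfl
      hid (IsPullback.id_vert g_DC)
    exact ((hvk.mp (IsPushout.id_horiz g_DC)).1).flip
  -- Step 2: `C_B <- C_D -> C_C` is the pullback of `f >> g_BA` and `g >> g_CA`.
  haveI : Mono g := hM.mono hg
  have comm : c_DB ≫ (f ≫ g_BA) = c_DC ≫ (g ≫ g_CA) := by
    rw [← Category.assoc, hpbB.w, ← Category.assoc, hpbC.w,
      Category.assoc, Category.assoc, hGpo.w]
  have hpb : IsPullback c_DB c_DC (f ≫ g_BA) (g ≫ g_CA) := by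
    refine IsPullback.of_isLimit' ⟨comm⟩ ?_
    refine PullbackCone.IsLimit.mk _ ?_ ?_ ?_ ?_
    · intro s
      refine hpbB.lift s.fst (hGpbk.lift (s.fst ≫ f) (s.snd ≫ g) ?_) ?_
      · simpa using s.condition
      · rw [hGpbk.lift_fst]
    · intro s
      exact hpbB.lift_fst _ _ _
    · intro s
      rw [← cancel_mono g, Category.assoc, hpbC.w, ← Category.assoc,
        hpbB.lift_snd, hGpbk.lift_snd]
    · intro s m hm1 hm2
      apply hpbB.hom_ext
      · rw [hm1, hpbB.lift_fst]
      · rw [hpbB.lift_snd]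
        apply hGpbk.hom_ext
        · rw [Category.assoc, hGpbk.lift_fst, ← hpbB.w,
            ← Category.assoc, hm1]
        · rw [Category.assoc, hGpbk.lift_snd, ← hpbC.w,
            ← Category.assoc, hm2]
  -- Step 3: apply effectivity of pushouts.
  exact heff (hM.comp_closed hf hg3) (hM.comp_closed hg hg4) hpb hCpo hq1 hq2
end
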